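/- Let a = √3/3 and β > 0. Then the cross product (∂p/∂u × ∂p/∂v)(−1,−1) equals ((2/3)α(1−2α), (2/3)α(1−2α), (4/3)α(1−α)), and for α > 0 this vector is parallel to the vector (−1,−1,1) (equivalently, to the unit normal of the sphere at p(−1,−1) = (−√3/3,−√3/3,√3/3)) if and only if α = 3/4. -/

import Mathlib

/-!
Since `Bⱼ²(-1) = δⱼ₀`, the two boundary curves of the patch through the corner `(-1,-1)` are the
Bernstein curves of the boundary rows of the control net, so the partial derivatives there are
`b₁₀ - b₀₀` and `b₀₁ - b₀₀`. For `a = √3/3` one has `√(1 - 2a²) = a` and `a² = 1/3`, and the cross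
product is a direct computation. Comparing its first and last coordinates with those of
`c • (-1,-1,1)` gives `α (3 - 4α) = 0`.
-/

noncomputable section

open Matrix

/-- Quadratic Bernstein polynomials (parametrized on `[-1,1]`). -/
def bern (i : Fin 3) (u : ℝ) : ℝ :=
  (Nat.choose 2 (i : ℕ)) * ((1 + u) / 2) ^ (i : ℕ) * ((1 - u) / 2) ^ (2 - (i : ℕ))

/-- Control points `ctrl a α β i j = b i j` of the tensor product quadratic Bézier patch:
`b₀₀ = (-a,-a,√(1-2a²))`, `b₂₀ = (a,-a,√(1-2a²))`, `b₀₂ = (-a,a,√(1-2a²))`,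
`b₂₂ = (a,a,√(1-2a²))`, `b₁₀ = α(b₀₀+b₂₀)`, `b₀₁ = α(b₀₀+b₀₂)`, `b₂₁ = α(b₂₀+b₂₂)`,
`b₁₂ = α(b₀₂+b₂₂)`, `b₁₁ = β(0,0,1)`. The first index is the `u`-index. -/
def ctrl (a α β : ℝ) : Fin 3 → Fin 3 → (Fin 3 → ℝ) :=
  ![![![-a, -a, Real.sqrt (1 - 2*a^2)],
     α • (![-a, -a, Real.sqrt (1 - 2*a^2)] + ![-a, a, Real.sqrt (1 - 2*a^2)]),
     ![-a, a, Real.sqrt (1 - 2*a^2)]],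
    ![α • (![-a, -a, Real.sqrt (1 - 2*a^2)] + ![a, -a, Real.sqrt (1 - 2*a^2)]),
     β • ![0, 0, 1],
     α • (![-a, a, Real.sqrt (1 - 2*a^2)] + ![a, a, Real.sqrt (1 - 2*a^2)])],
    ![![a, -a, Real.sqrt (1 - 2*a^2)],
     α • (![a, -a, Real.sqrt (1 - 2*a^2)] + ![a, a, Real.sqrt (1 - 2*a^2)]),
     ![a, a, Real.sqrt (1 - 2*a^2)]]]

/-- The tensor product quadratic Bézier patch `p(u,v) = ∑ᵢ ∑ⱼ Bᵢ²(u) Bⱼ²(v) bᵢⱼ`,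
viewed as a map into `Fin 3 → ℝ`. -/
def bez (a α β u v : ℝ) : Fin 3 → ℝ :=
  ∑ i : Fin 3, ∑ j : Fin 3, (bern i u * bern j v) • ctrl a α β i j

lemma bern_neg_one (i : Fin 3) : bern i (-1) = if i = 0 then 1 else 0 := by
  fin_cases i <;> norm_num [bern]

lemma hasDerivAt_bern_zero (u : ℝ) : HasDerivAt (bern 0) (-(1 - u) / 2) u := by
  have e : bern 0 = fun v => ((1 - v) / 2) ^ 2 := by funext v; simp [bern]
  exact e ▸ ((((hasDerivAt_id' u).const_sub 1).div_const 2).pow 2).congr_deriv (by ring)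

lemma hasDerivAt_bern_one (u : ℝ) : HasDerivAt (bern 1) (-u) u := by
  have e : bern 1 = fun v => 2 * ((1 + v) / 2 * ((1 - v) / 2)) := by
    funext v; norm_num [bern]; ring
  exact e ▸ ((((hasDerivAt_id' u).const_add 1).div_const 2).mul
    (((hasDerivAt_id' u).const_sub 1).div_const 2) |>.const_mul 2).congr_deriv (by ring)

lemma hasDerivAt_bern_two (u : ℝ) : HasDerivAt (bern 2) ((1 + u) / 2) u := by
  have e : bern 2 = fun v => ((1 + v) / 2) ^ 2 := by funext v; simp [bern]
  exact e ▸ ((((hasDerivAt_id' u).const_add 1).div_const 2).pow 2).congr_deriv (by ring)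

section BezierPatch

variable {E : Type*} [NormedAddCommGroup E] [NormedSpace ℝ E]

def bezierPatch (b : Fin 3 → Fin 3 → E) (u v : ℝ) : E :=
  ∑ i : Fin 3, ∑ j : Fin 3, (bern i u * bern j v) • b i j

variable (b : Fin 3 → Fin 3 → E)

lemma bezierPatch_apply_neg_one_right (u : ℝ) :
    bezierPatch b u (-1) = ∑ i : Fin 3, bern i u • b i 0 := by
  simp [bezierPatch, bern_neg_one, Fin.sum_univ_three]

lemma bezierPatch_apply_neg_one_left (v : ℝ) :
    bezierPatch b (-1) v = ∑ j : Fin 3, bern j v • b 0 j := by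
  simp [bezierPatch, bern_neg_one, Fin.sum_univ_three]

lemma hasDerivAt_bernstein_curve_neg_one (c : Fin 3 → E) :
    HasDerivAt (fun u => ∑ i : Fin 3, bern i u • c i) (c 1 - c 0) (-1) := by
  simp only [Fin.sum_univ_three]
  refine (((hasDerivAt_bern_zero (-1)).smul_const (c 0)).fun_add
    ((hasDerivAt_bern_one (-1)).smul_const (c 1))).fun_add
    ((hasDerivAt_bern_two (-1)).smul_const (c 2)) |>.congr_deriv ?_
  module

lemma deriv_bezierPatch_fst_corner :
    deriv (fun u => bezierPatch b u (-1)) (-1) = b 1 0 - b 0 0 := by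
  simp only [bezierPatch_apply_neg_one_right]
  exact (hasDerivAt_bernstein_curve_neg_one _).deriv

lemma deriv_bezierPatch_snd_corner :
    deriv (fun v => bezierPatch b (-1) v) (-1) = b 0 1 - b 0 0 := by
  simp only [bezierPatch_apply_neg_one_left]
  exact (hasDerivAt_bernstein_curve_neg_one _).deriv

end BezierPatch

lemma bez_eq_bezierPatch (a α β : ℝ) : bez a α β = bezierPatch (ctrl a α β) := rfl

lemma cross_deriv_bez_corner (a α β : ℝ) :
    (deriv (fun u => bez a α β u (-1)) (-1)) ⨯₃ (deriv (fun v => bez a α β (-1) v) (-1)) =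
      ![2 * α * (a * √(1 - 2 * a ^ 2)) * (1 - 2 * α), 2 * α * (a * √(1 - 2 * a ^ 2)) * (1 - 2 * α),
        4 * α * a ^ 2 * (1 - α)] := by
  rw [bez_eq_bezierPatch, deriv_bezierPatch_fst_corner, deriv_bezierPatch_snd_corner]
  ext i
  fin_cases i <;>
    simp only [ctrl, cross_apply, add_cons, sub_cons, smul_cons, head_cons, tail_cons, smul_eq_mul,
      Fin.isValue, Fin.zero_eta, Fin.mk_one, Fin.reduceFinMk, cons_val', cons_val_zero, cons_val_one,
      cons_val, cons_val_fin_one] <;>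
    ring

lemma exists_smul_neg_one_neg_one_one_iff {α : ℝ} (hα : 0 < α) :
    (∃ c : ℝ, c ≠ 0 ∧ ![2/3*α*(1 - 2*α), 2/3*α*(1 - 2*α), 4/3*α*(1 - α)] = c • ![(-1 : ℝ), -1, 1])
      ↔ α = 3/4 := by
  constructor
  · rintro ⟨c, -, hc⟩
    have h0 := congr_fun hc 0
    have h2 := congr_fun hc 2
    simp only [Fin.isValue, cons_val_zero, cons_val, Pi.smul_apply, smul_eq_mul] at h0 h2
    have : α * (3 - 4 * α) = 0 := by linarith
    rcases mul_eq_zero.1 this with h | h <;> linarith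
  · rintro rfl
    exact ⟨1/4, by norm_num, by ext i; fin_cases i <;> norm_num⟩

theorem G1_corner_condition_general (a : ℝ) (haa : a = Real.sqrt 3 / 3) (α β : ℝ) :
    (deriv (fun u => bez a α β u (-1)) (-1)) ⨯₃ (deriv (fun v => bez a α β (-1) v) (-1)) =
      ![2/3*α*(1 - 2*α), 2/3*α*(1 - 2*α), 4/3*α*(1 - α)] ∧
    (0 < α →
      ((∃ c : ℝ, c ≠ 0 ∧
          (deriv (fun u => bez a α β u (-1)) (-1)) ⨯₃ (deriv (fun v => bez a α β (-1) v) (-1))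
            = c • ![(-1 : ℝ), -1, 1]) ↔ α = 3/4)) := by
  have ha_sq : a ^ 2 = 1 / 3 := by
    rw [haa, div_pow, Real.sq_sqrt (by norm_num)]; norm_num
  have ha_sqrt : √(1 - 2 * a ^ 2) = a := by
    rw [show 1 - 2 * a ^ 2 = a ^ 2 by linarith, Real.sqrt_sq (by rw [haa]; positivity)]
  have hcross : (deriv (fun u => bez a α β u (-1)) (-1)) ⨯₃
      (deriv (fun v => bez a α β (-1) v) (-1)) =
        ![2/3*α*(1 - 2*α), 2/3*α*(1 - 2*α), 4/3*α*(1 - α)] := by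
    rw [cross_deriv_bez_corner, ha_sqrt, ← sq, ha_sq]
    simp only [Matrix.vecCons_inj]
    exact ⟨by ring, by ring, by ring, trivial⟩
  exact ⟨hcross, fun hα => hcross ▸ exists_smul_neg_one_neg_one_one_iff hα⟩

/-- For `a = √3/3` and `β > 0`, the cross product `(∂p/∂u × ∂p/∂v)(-1,-1)` equals
`((2/3)α(1-2α), (2/3)α(1-2α), (4/3)α(1-α))`, and for `α > 0` this vector is parallel to
`(-1,-1,1)` (the direction of the unit normal of the sphere at
`p(-1,-1) = (-√3/3,-√3/3,√3/3)`) if and only if `α = 3/4`. -/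
theorem G1_corner_condition (a : ℝ) (haa : a = Real.sqrt 3 / 3) (α β : ℝ) (hβ : 0 < β) :
    (deriv (fun u => bez a α β u (-1)) (-1)) ⨯₃ (deriv (fun v => bez a α β (-1) v) (-1)) =
      ![2/3*α*(1 - 2*α), 2/3*α*(1 - 2*α), 4/3*α*(1 - α)] ∧
    (0 < α →
      ((∃ c : ℝ, c ≠ 0 ∧
          (deriv (fun u => bez a α β u (-1)) (-1)) ⨯₃ (deriv (fun v => bez a α β (-1) v) (-1))
            = c • ![(-1 : ℝ), -1, 1]) ↔ α = 3/4)) :=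
  G1_corner_condition_general a haa α β

end
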